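/- In the finite discounted MDP setting with positivity, the direct method error is controlled by the Bellman residual: for any function q̂ : 𝒮×𝒜 → ℝ, |E_{s∼p_e^{(1)}}[q̂(s, π^e)] − J(γ)| ≤ (1−γ)^{−1} (E_{p_b}[μ*(s,a)²])^{1/2} · (E_{p_b}[((𝓑q̂)(s,a) − q̂(s,a))²])^{1/2}, where q̂(s, π^e) = Σ_{a∈𝒜} π^e(a|s) q̂(s,a) and (𝓑q̂)(s,a) = E[r + γ q̂(s′, π^e) | s,a] is the Bellman operator applied to q̂ under the kernel p(s′,r|s,a). -/

import Mathlib

/-!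
Let `V = q̂(·, π^e)` and let `P` be the state transition matrix of the evaluation chain. Since
`E_{p_e^{(n)}}[P V] = E_{p_e^{(n+1)}}[V]`, the discounted sum of the π^e-averaged Bellman residual
`𝓑q̂ − q̂` along the chain telescopes to `J(γ) − E_{p_e^{(1)}}[V]`. Hence the direct-method error
is `(1 − γ)⁻¹ E_{p^{(∞)}_{e,γ} × π^e}[q̂ − 𝓑q̂]`; positivity lets us rewrite this expectation as
`E_{p_b}[μ* (q̂ − 𝓑q̂)]`, and Cauchy–Schwarz under `p_b` gives the bound.
-/

open Finset Matrix

lemma tsum_pow_mul_sub_mul_tsum_pow_mul_succ {γ : ℝ} {a : ℕ → ℝ}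
    (ha : Summable fun n => γ ^ n * a n) :
    ∑' n, γ ^ n * a n - γ * ∑' n, γ ^ n * a (n + 1) = a 0 := by
  rw [ha.tsum_eq_zero_add, ← tsum_mul_left]
  simp only [pow_succ', mul_assoc, pow_zero, one_mul, add_sub_cancel_right]

lemma abs_sum_mul_mul_le_sqrt_mul_sqrt {ι : Type*} (s : Finset ι) {w : ι → ℝ}
    (hw : ∀ i ∈ s, 0 ≤ w i) (f g : ι → ℝ) :
    |∑ i ∈ s, w i * f i * g i| ≤ √(∑ i ∈ s, w i * f i ^ 2) * √(∑ i ∈ s, w i * g i ^ 2) := by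
  rw [← Real.sqrt_mul (sum_nonneg fun i hi => mul_nonneg (hw i hi) (sq_nonneg _))]
  refine Real.abs_le_sqrt (sum_sq_le_sum_mul_sum_of_sq_le_mul s
    (fun i hi => mul_nonneg (hw i hi) (sq_nonneg _))
    (fun i hi => mul_nonneg (hw i hi) (sq_nonneg _)) fun i _ => le_of_eq (by ring))

lemma mul_div_cancel_of_pos_imp_pos {a b : ℝ} (ha : 0 ≤ a) (hab : 0 < a → 0 < b) :
    b * (a / b) = a := by
  rcases ha.eq_or_lt with rfl | ha
  · simp
  · exact mul_div_cancel₀ a (hab ha).ne'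

lemma abs_sum_mul_le_sqrt_mul_sqrt_of_density {ι : Type*} (s : Finset ι) {ν w μ : ι → ℝ}
    (hν : ∀ i ∈ s, 0 ≤ ν i) (hw : ∀ i ∈ s, 0 ≤ w i) (hνw : ∀ i ∈ s, 0 < ν i → 0 < w i)
    (hμ : ∀ i ∈ s, μ i = ν i / w i) (g : ι → ℝ) :
    |∑ i ∈ s, ν i * g i| ≤ √(∑ i ∈ s, w i * μ i ^ 2) * √(∑ i ∈ s, w i * g i ^ 2) := by
  have hchange : ∑ i ∈ s, ν i * g i = ∑ i ∈ s, w i * μ i * g i := sum_congr rfl fun i hi => by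
    rw [hμ i hi, mul_div_cancel_of_pos_imp_pos (hν i hi) (hνw i hi)]
  exact hchange ▸ abs_sum_mul_mul_le_sqrt_mul_sqrt s hw μ g

section RowStochastic

variable {n : Type*} [Fintype n] [DecidableEq n] {M : Matrix n n ℝ} {x : n → ℝ} {γ : ℝ}

lemma vecMul_le_dotProduct_one_of_mem_rowStochastic (hM : M ∈ rowStochastic ℝ n)
    (hx : ∀ i, 0 ≤ x i) (j : n) : (x ᵥ* M) j ≤ x ⬝ᵥ 1 :=
  calc (x ᵥ* M) j ≤ (x ᵥ* M) ⬝ᵥ 1 := by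
        simpa [dotProduct] using
          single_le_sum (fun i _ => nonneg_vecMul_of_mem_rowStochastic hM hx i) (mem_univ j)
    _ = x ⬝ᵥ 1 := by rw [← dotProduct_mulVec, one_vecMul_of_mem_rowStochastic hM]

lemma summable_pow_mul_vecMul_pow (hγ0 : 0 ≤ γ) (hγ1 : γ < 1)
    (hM : M ∈ rowStochastic ℝ n) (hx : ∀ i, 0 ≤ x i) (j : n) :
    Summable fun k : ℕ => γ ^ k * (x ᵥ* M ^ k) j := by
  have hMk : ∀ k : ℕ, M ^ k ∈ rowStochastic ℝ n := fun k => pow_mem hM k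
  refine Summable.of_nonneg_of_le (fun k => mul_nonneg (pow_nonneg hγ0 k)
    (nonneg_vecMul_of_mem_rowStochastic (hMk k) hx j)) (fun k => ?_)
    ((summable_geometric_of_lt_one hγ0 hγ1).mul_right (x ⬝ᵥ 1))
  exact mul_le_mul_of_nonneg_left (vecMul_le_dotProduct_one_of_mem_rowStochastic (hMk k) hx j)
    (pow_nonneg hγ0 k)

lemma summable_pow_mul_vecMul_pow_dotProduct
    (hsum : ∀ j, Summable fun k : ℕ => γ ^ k * (x ᵥ* M ^ k) j) (f : n → ℝ) :
    Summable fun k : ℕ => γ ^ k * ((x ᵥ* M ^ k) ⬝ᵥ f) := by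
  simpa only [dotProduct, mul_sum, mul_assoc] using
    summable_sum fun j _ => by simpa only [mul_assoc] using (hsum j).mul_right (f j)

/-- Unnormalized: for a Markov chain with initial law `x` and transition matrix `M`, the
discounted visitation distribution is `(1 - γ) • discountedOccupancy γ x M`. -/
noncomputable def discountedOccupancy (γ : ℝ) (x : n → ℝ) (M : Matrix n n ℝ) : n → ℝ :=
  fun j => ∑' k : ℕ, γ ^ k * (x ᵥ* M ^ k) j

lemma discountedOccupancy_nonneg (hγ0 : 0 ≤ γ) (hM : M ∈ rowStochastic ℝ n)
    (hx : ∀ i, 0 ≤ x i) (j : n) : 0 ≤ discountedOccupancy γ x M j :=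
  tsum_nonneg fun k => mul_nonneg (pow_nonneg hγ0 k)
    (nonneg_vecMul_of_mem_rowStochastic (pow_mem hM k) hx j)

lemma discountedOccupancy_dotProduct
    (hsum : ∀ j, Summable fun k : ℕ => γ ^ k * (x ᵥ* M ^ k) j) (f : n → ℝ) :
    discountedOccupancy γ x M ⬝ᵥ f = ∑' k : ℕ, γ ^ k * ((x ᵥ* M ^ k) ⬝ᵥ f) := by
  simp only [discountedOccupancy, dotProduct, ← tsum_mul_right, mul_sum, mul_assoc]
  exact (Summable.tsum_finsetSum fun j _ => by
    simpa only [mul_assoc] using (hsum j).mul_right (f j)).symm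

lemma discountedOccupancy_dotProduct_sub_smul_mulVec
    (hsum : ∀ j, Summable fun k : ℕ => γ ^ k * (x ᵥ* M ^ k) j) (f : n → ℝ) :
    discountedOccupancy γ x M ⬝ᵥ (f - γ • M *ᵥ f) = x ⬝ᵥ f := by
  have hshift : ∀ k : ℕ, (x ᵥ* M ^ k) ⬝ᵥ (M *ᵥ f) = (x ᵥ* M ^ (k + 1)) ⬝ᵥ f := fun k => by
    rw [dotProduct_mulVec, vecMul_vecMul, pow_succ]
  rw [dotProduct_sub, dotProduct_smul, smul_eq_mul, discountedOccupancy_dotProduct hsum,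
    discountedOccupancy_dotProduct hsum]
  simp only [hshift]
  rw [tsum_pow_mul_sub_mul_tsum_pow_mul_succ (summable_pow_mul_vecMul_pow_dotProduct hsum f),
    pow_zero, vecMul_one]

end RowStochastic

section MDP

variable {S A R : Type*} [Fintype S] [Fintype A] [Fintype R]
  (p : S → A → S × R → ℝ) (π : S → A → ℝ)

/-- `q(s, π)` in the paper's notation. -/
def policyAvg (q : S → A → ℝ) : S → ℝ := fun s => ∑ a, π s a * q s a

def expectedReward (rval : R → ℝ) : S → A → ℝ := fun s a => ∑ sr, p s a sr * rval sr.2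

def bellman (rval : R → ℝ) (γ : ℝ) (q : S → A → ℝ) : S → A → ℝ :=
  fun s a => ∑ sr, p s a sr * (rval sr.2 + γ * policyAvg π q sr.1)

def policyKernel : Matrix S S ℝ := fun s s' => ∑ a, π s a * ∑ r, p s a (s', r)

lemma policyKernel_mem_rowStochastic [DecidableEq S] (hp0 : ∀ s a sr, 0 ≤ p s a sr)
    (hp1 : ∀ s a, ∑ sr, p s a sr = 1) (hπ0 : ∀ s a, 0 ≤ π s a) (hπ1 : ∀ s, ∑ a, π s a = 1) :
    policyKernel p π ∈ rowStochastic ℝ S := by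
  refine mem_rowStochastic_iff_sum.2 ⟨fun s s' => sum_nonneg fun a _ =>
    mul_nonneg (hπ0 s a) (sum_nonneg fun r _ => hp0 s a (s', r)), fun s => ?_⟩
  simp only [policyKernel]
  rw [sum_comm]
  simp only [← mul_sum, ← Fintype.sum_prod_type', hp1, mul_one, hπ1]

lemma eq_vecMul_policyKernel_pow [DecidableEq S] {x : ℕ → S → ℝ}
    (hx : ∀ n s', x (n + 1) s' = ∑ s, ∑ a, x n s * π s a * ∑ r, p s a (s', r)) (n : ℕ) :
    x n = x 0 ᵥ* policyKernel p π ^ n := by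
  induction n with
  | zero => simp
  | succ n ih =>
    funext s'
    rw [hx, pow_succ, ← vecMul_vecMul, ← ih]
    simp only [vecMul, dotProduct, policyKernel, mul_sum, mul_assoc]

lemma policyKernel_mulVec (f : S → ℝ) (s : S) :
    (policyKernel p π *ᵥ f) s = ∑ a, π s a * ∑ sr, p s a sr * f sr.1 := by
  simp only [mulVec, dotProduct, policyKernel, Fintype.sum_prod_type, sum_mul, mul_sum, mul_assoc]
  exact sum_comm

lemma policyAvg_bellman_sub (rval : R → ℝ) (γ : ℝ) (q : S → A → ℝ) :
    policyAvg π (bellman p π rval γ q - q)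
      = policyAvg π (expectedReward p rval) + γ • policyKernel p π *ᵥ policyAvg π q
        - policyAvg π q := by
  funext s
  simp only [policyAvg, bellman, expectedReward, Pi.add_apply, Pi.sub_apply, Pi.smul_apply,
    smul_eq_mul, policyKernel_mulVec, mul_sum, ← sum_add_distrib, ← sum_sub_distrib]
  refine sum_congr rfl fun a _ => ?_
  simp only [mul_add, sum_add_distrib, mul_left_comm _ γ, ← mul_sum]
  ring

lemma sum_sum_sum_mul_reward_eq_dotProduct (rval : R → ℝ) (x : S → ℝ) :
    ∑ s, ∑ a, ∑ sr, x s * π s a * p s a sr * rval sr.2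
      = x ⬝ᵥ policyAvg π (expectedReward p rval) := by
  simp only [dotProduct, policyAvg, expectedReward, mul_sum, mul_assoc]

lemma discountedOccupancy_dotProduct_policyAvg_bellman_sub [DecidableEq S] {γ : ℝ} {x : S → ℝ}
    (hsum : ∀ s, Summable fun k : ℕ => γ ^ k * (x ᵥ* policyKernel p π ^ k) s)
    (rval : R → ℝ) (q : S → A → ℝ) :
    discountedOccupancy γ x (policyKernel p π) ⬝ᵥ policyAvg π (bellman p π rval γ q - q)
      = discountedOccupancy γ x (policyKernel p π) ⬝ᵥ policyAvg π (expectedReward p rval)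
        - x ⬝ᵥ policyAvg π q := by
  rw [policyAvg_bellman_sub, add_sub_assoc, dotProduct_add, ← neg_sub (policyAvg π q),
    dotProduct_neg, discountedOccupancy_dotProduct_sub_smul_mulVec hsum, sub_eq_add_neg]

lemma sum_sum_sum_kernel_mul_const (hp1 : ∀ s a, ∑ sr, p s a sr = 1) (w c : S → A → ℝ) :
    ∑ s, ∑ a, ∑ sr, w s a * p s a sr * c s a = ∑ x : S × A, w x.1 x.2 * c x.1 x.2 := by
  rw [Fintype.sum_prod_type]
  refine sum_congr rfl fun s _ => sum_congr rfl fun a _ => ?_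
  rw [← sum_mul, ← mul_sum, hp1, mul_one]

end MDP

theorem mdp_direct_method_bellman_residual_bound_general
    {S A R : Type} [Fintype S] [Fintype A] [Fintype R]
    (rval : R → ℝ) (γ : ℝ) (hγ0 : 0 ≤ γ) (hγ1 : γ < 1)
    (p : S → A → S × R → ℝ)
    (hp0 : ∀ s a sr, 0 ≤ p s a sr) (hpsum : ∀ s a, ∑ sr : S × R, p s a sr = 1)
    (pie : S → A → ℝ) (hpie0 : ∀ s a, 0 ≤ pie s a) (hpie1 : ∀ s, ∑ a, pie s a = 1)
    (p1e : S → ℝ) (hp1e0 : ∀ s, 0 ≤ p1e s)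
    (pb : S → ℝ) (hpb0 : ∀ s, 0 ≤ pb s)
    (pib : S → A → ℝ) (hpib0 : ∀ s a, 0 ≤ pib s a)
    (pe : ℕ → S → ℝ)
    (hpe0 : ∀ s, pe 0 s = p1e s)
    (hpeS : ∀ n s', pe (n + 1) s' = ∑ s, ∑ a, pe n s * pie s a * ∑ r : R, p s a (s', r))
    (pinf : S → ℝ) (hpinf : ∀ s, pinf s = (1 - γ) * ∑' n : ℕ, γ ^ n * pe n s)
    (J : ℝ)
    (hJ : J = ∑' n : ℕ, γ ^ n *
        ∑ s, ∑ a, ∑ sr : S × R, pe n s * pie s a * p s a sr * rval sr.2)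
    (μ : S → A → ℝ) (hμ : ∀ s a, μ s a = pinf s * pie s a / (pb s * pib s a))
    (hpos : ∀ s a, 0 < pinf s * pie s a → 0 < pb s * pib s a)
    (Ed : (S → A → S × R → ℝ) → ℝ)
    (hEd : ∀ f, Ed f = ∑ s, ∑ a, ∑ sr : S × R, pb s * pib s a * p s a sr * f s a sr)
    (qhat : S → A → ℝ)
    (Bq : S → A → ℝ)
    (hBq : ∀ s a, Bq s a =
      ∑ sr : S × R, p s a sr * (rval sr.2 + γ * ∑ a', pie sr.1 a' * qhat sr.1 a')) :
    |(∑ s, p1e s * ∑ a, pie s a * qhat s a) - J|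
      ≤ (1 - γ)⁻¹ * Real.sqrt (Ed (fun s a _ => μ s a ^ 2))
          * Real.sqrt (Ed (fun s a _ => (Bq s a - qhat s a) ^ 2)) := by
  classical
  have hP := policyKernel_mem_rowStochastic p pie hp0 hpsum hpie0 hpie1
  have hpe : ∀ n, pe n = p1e ᵥ* policyKernel p pie ^ n := by
    simpa only [show pe 0 = p1e from funext hpe0] using eq_vecMul_policyKernel_pow p pie hpeS
  have hsum := summable_pow_mul_vecMul_pow hγ0 hγ1 hP hp1e0
  have hpinf_eq : ∀ s, pinf s = (1 - γ) * discountedOccupancy γ p1e (policyKernel p pie) s :=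
    fun s => by simp only [hpinf, hpe]; rfl
  have hJ_eq : J = discountedOccupancy γ p1e (policyKernel p pie) ⬝ᵥ
      policyAvg pie (expectedReward p rval) := by
    rw [hJ, discountedOccupancy_dotProduct hsum]
    simp only [hpe, sum_sum_sum_mul_reward_eq_dotProduct]
  have hresidual : (1 - γ) * (J - p1e ⬝ᵥ policyAvg pie qhat)
      = ∑ x : S × A, pinf x.1 * pie x.1 x.2 * (Bq x.1 x.2 - qhat x.1 x.2) := by
    rw [hJ_eq, ← discountedOccupancy_dotProduct_policyAvg_bellman_sub p pie hsum rval qhat,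
      show bellman p pie rval γ qhat = Bq from funext₂ fun s a => (hBq s a).symm]
    simp only [dotProduct, policyAvg, Fintype.sum_prod_type, hpinf_eq, mul_sum, mul_assoc,
      Pi.sub_apply]
  have hpinf_nonneg : ∀ s, 0 ≤ pinf s := fun s => hpinf_eq s ▸
    mul_nonneg (sub_nonneg.2 hγ1.le) (discountedOccupancy_nonneg hγ0 hP hp1e0 s)
  have hCS := abs_sum_mul_le_sqrt_mul_sqrt_of_density (ι := S × A) univ
    (fun x _ => mul_nonneg (hpinf_nonneg x.1) (hpie0 x.1 x.2))
    (fun x _ => mul_nonneg (hpb0 x.1) (hpib0 x.1 x.2)) (fun x _ => hpos x.1 x.2)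
    (fun x _ => hμ x.1 x.2) fun x => Bq x.1 x.2 - qhat x.1 x.2
  rw [hEd, hEd, sum_sum_sum_kernel_mul_const p hpsum, sum_sum_sum_kernel_mul_const p hpsum,
    mul_assoc, abs_sub_comm, le_inv_mul_iff₀ (sub_pos.2 hγ1), ← abs_of_pos (sub_pos.2 hγ1),
    ← abs_mul]
  exact (congrArg abs hresidual).trans_le hCS

/-- Finite discounted MDP with positivity. The direct-method error is
controlled by the Bellman residual: for any `q̂ : 𝒮 × 𝒜 → ℝ`,
`|E_{s∼p_e^{(1)}}[q̂(s,π^e)] − J(γ)|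
   ≤ (1−γ)⁻¹ (E_{p_b}[μ*(s,a)²])^{1/2} (E_{p_b}[((𝓑q̂)(s,a) − q̂(s,a))²])^{1/2}`. -/
theorem mdp_direct_method_bellman_residual_bound
    {S A R : Type} [Fintype S] [Fintype A] [Fintype R]
    (rval : R → ℝ) (γ : ℝ) (hγ0 : 0 ≤ γ) (hγ1 : γ < 1)
    (p : S → A → S × R → ℝ)
    (hp0 : ∀ s a sr, 0 ≤ p s a sr) (hpsum : ∀ s a, ∑ sr : S × R, p s a sr = 1)
    (pie : S → A → ℝ) (hpie0 : ∀ s a, 0 ≤ pie s a) (hpie1 : ∀ s, ∑ a, pie s a = 1)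
    (p1e : S → ℝ) (hp1e0 : ∀ s, 0 ≤ p1e s) (hp1e1 : ∑ s, p1e s = 1)
    (pb : S → ℝ) (hpb0 : ∀ s, 0 ≤ pb s) (hpb1 : ∑ s, pb s = 1)
    (pib : S → A → ℝ) (hpib0 : ∀ s a, 0 ≤ pib s a) (hpib1 : ∀ s, ∑ a, pib s a = 1)
    (pe : ℕ → S → ℝ)
    (hpe0 : ∀ s, pe 0 s = p1e s)
    (hpeS : ∀ n s', pe (n + 1) s' = ∑ s, ∑ a, pe n s * pie s a * ∑ r : R, p s a (s', r))
    (pinf : S → ℝ) (hpinf : ∀ s, pinf s = (1 - γ) * ∑' n : ℕ, γ ^ n * pe n s)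
    (J : ℝ)
    (hJ : J = ∑' n : ℕ, γ ^ n *
        ∑ s, ∑ a, ∑ sr : S × R, pe n s * pie s a * p s a sr * rval sr.2)
    (μ : S → A → ℝ) (hμ : ∀ s a, μ s a = pinf s * pie s a / (pb s * pib s a))
    (hpos : ∀ s a, 0 < pinf s * pie s a → 0 < pb s * pib s a)
    (Ed : (S → A → S × R → ℝ) → ℝ)
    (hEd : ∀ f, Ed f = ∑ s, ∑ a, ∑ sr : S × R, pb s * pib s a * p s a sr * f s a sr)
    (qhat : S → A → ℝ)
    (Bq : S → A → ℝ)
    (hBq : ∀ s a, Bq s a =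
      ∑ sr : S × R, p s a sr * (rval sr.2 + γ * ∑ a', pie sr.1 a' * qhat sr.1 a')) :
    |(∑ s, p1e s * ∑ a, pie s a * qhat s a) - J|
      ≤ (1 - γ)⁻¹ * Real.sqrt (Ed (fun s a _ => μ s a ^ 2))
          * Real.sqrt (Ed (fun s a _ => (Bq s a - qhat s a) ^ 2)) :=
  mdp_direct_method_bellman_residual_bound_general rval γ hγ0 hγ1 p hp0 hpsum pie hpie0 hpie1 p1e
    hp1e0 pb hpb0 pib hpib0 pe hpe0 hpeS pinf hpinf J hJ μ hμ hpos Ed hEd qhat Bq hBq
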